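/- Let f : ℝ^d → ℝ be differentiable, α-strongly convex and β-smooth with minimizer x*. Let u be a random direction vector with ‖u‖ = 1 almost surely, satisfying E[⟨∇f(x), u⟩²] ≥ C·‖∇f(x)‖² for some C > 0 and all x. Then for any x, the expected value of the exact line-search minimum along u satisfies E[min_{s} f(x + s·u)] − f(x*) ≤ (1 − αC/β)·(f(x) − f(x*)). -/

import Mathlib

open MeasureTheory ProbabilityTheory
open scoped RealInnerProductSpace

/-- Expected descent of exact line search along a random direction: if `f` is differentiable,
α-strongly convex and β-smooth (`0 < α ≤ β`) with minimizer `x*`, and the random direction `u`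
satisfies `‖u‖ = 1` a.s. and `E[⟨∇f(x),u⟩²] ≥ C·‖∇f(x)‖²` for all `x` with `C > 0`, then for
any `x`, the expected exact line-search minimum `M` along `u` satisfies
`E[M] − f(x*) ≤ (1 − αC/β)·(f(x) − f(x*))`. -/
theorem stmt_13 {d : ℕ} (f : EuclideanSpace ℝ (Fin d) → ℝ) (hdiff : Differentiable ℝ f)
    (α β : ℝ) (hα : 0 < α) (hαβ : α ≤ β)
    (hconv : ∀ x h : EuclideanSpace ℝ (Fin d),
      f x + ⟪gradient f x, h⟫ + α / 2 * ‖h‖ ^ 2 ≤ f (x + h))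
    (hsmooth : ∀ x h : EuclideanSpace ℝ (Fin d),
      f (x + h) ≤ f x + ⟪gradient f x, h⟫ + β / 2 * ‖h‖ ^ 2)
    (xstar : EuclideanSpace ℝ (Fin d)) (hmin : ∀ y, f xstar ≤ f y)
    {Ω : Type*} [MeasurableSpace Ω] (P : Measure Ω) [IsProbabilityMeasure P]
    (u : Ω → EuclideanSpace ℝ (Fin d)) (hunit : ∀ᵐ ω ∂P, ‖u ω‖ = 1)
    (C : ℝ) (hC : 0 < C)
    (hdir : ∀ x : EuclideanSpace ℝ (Fin d),
      Integrable (fun ω => ⟪gradient f x, u ω⟫ ^ 2) P ∧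
      ∫ ω, ⟪gradient f x, u ω⟫ ^ 2 ∂P ≥ C * ‖gradient f x‖ ^ 2)
    (x : EuclideanSpace ℝ (Fin d)) (M : Ω → ℝ) (hMint : Integrable M P)
    (hM : ∀ ω, IsGLB (Set.range fun s : ℝ => f (x + s • u ω)) (M ω)) :
    ∫ ω, M ω ∂P - f xstar ≤ (1 - α * C / β) * (f x - f xstar) := by
  have hβ : 0 < β := hα.trans_le hαβ
  set g := gradient f x with hg
  have key : ∀ᵐ ω ∂P, M ω ≤ f x - ⟪g, u ω⟫ ^ 2 / (2 * β) := by
    filter_upwards [hunit] with ω hω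
    have h1 : M ω ≤ f (x + (-⟪g, u ω⟫ / β) • u ω) :=
      (hM ω).1 ⟨-⟪g, u ω⟫ / β, rfl⟩
    have h2 := hsmooth x ((-⟪g, u ω⟫ / β) • u ω)
    have hnorm : ‖(-⟪g, u ω⟫ / β) • u ω‖ ^ 2 = (⟪g, u ω⟫ / β) ^ 2 := by
      rw [norm_smul, hω, mul_one, Real.norm_eq_abs, sq_abs]
      ring
    have hinner : ⟪g, (-⟪g, u ω⟫ / β) • u ω⟫ = (-⟪g, u ω⟫ / β) * ⟪g, u ω⟫ :=
      real_inner_smul_right _ _ _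
    rw [hinner, hnorm] at h2
    have heq : f x + -⟪g, u ω⟫ / β * ⟪g, u ω⟫ + β / 2 * (⟪g, u ω⟫ / β) ^ 2
        = f x - ⟪g, u ω⟫ ^ 2 / (2 * β) := by
      field_simp
      ring
    linarith [h1.trans h2]
  have hq := hdir x
  have hint2 : Integrable (fun ω => f x - ⟪g, u ω⟫ ^ 2 / (2 * β)) P :=
    (integrable_const _).sub (hq.1.div_const _)
  have h3 : ∫ ω, M ω ∂P ≤ ∫ ω, (f x - ⟪g, u ω⟫ ^ 2 / (2 * β)) ∂P :=
    integral_mono_ae hMint hint2 key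
  have h4 : ∫ ω, (f x - ⟪g, u ω⟫ ^ 2 / (2 * β)) ∂P
      = f x - (∫ ω, ⟪g, u ω⟫ ^ 2 ∂P) / (2 * β) := by
    rw [integral_sub (integrable_const _) (hq.1.div_const _), integral_const,
      probReal_univ, one_smul, integral_div]
  have h2β : (0:ℝ) < 2 * β := by linarith
  have h5 : ∫ ω, M ω ∂P ≤ f x - C * ‖g‖ ^ 2 / (2 * β) := by
    rw [h4] at h3
    have h6 : C * ‖g‖ ^ 2 / (2 * β) ≤ (∫ ω, ⟪g, u ω⟫ ^ 2 ∂P) / (2 * β) := by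
      gcongr
      exact hq.2
    linarith
  -- PL inequality
  have hPL : f x - f xstar ≤ ‖g‖ ^ 2 / (2 * α) := by
    have hc := hconv x (xstar - x)
    rw [add_sub_cancel] at hc
    have hib : -(‖g‖ * ‖xstar - x‖) ≤ ⟪g, xstar - x⟫ :=
      neg_le_of_abs_le (abs_real_inner_le_norm _ _)
    have hsq : 0 ≤ (α * ‖xstar - x‖ - ‖g‖) ^ 2 := sq_nonneg _
    simp only [← hg] at hc
    rw [le_div_iff₀ (by linarith : (0:ℝ) < 2 * α)]
    nlinarith [hc, hib, hsq]
  -- combine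
  have hfx : 0 ≤ f x - f xstar := by linarith [hmin x]
  have hgoal : α * C / β * (f x - f xstar) ≤ C * ‖g‖ ^ 2 / (2 * β) := by
    have h7 : 2 * α * (f x - f xstar) ≤ ‖g‖ ^ 2 := by
      rw [le_div_iff₀ (by linarith : (0:ℝ) < 2 * α)] at hPL
      linarith
    rw [div_mul_eq_mul_div, div_le_div_iff₀ hβ h2β]
    nlinarith [mul_le_mul_of_nonneg_left h7 (mul_pos hC hβ).le]
  nlinarith [h5, hgoal]
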